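/- arXiv:2506.19493 — 4 statements merged into one kernel-verified Lean document; each statement's English description precedes it below -/
import Mathlib

section
/- Every k-local word represents a (k+1)-representable graph; that is, if a word w is k-local, then there exists a (k+1)-uniform word w' over the same alphabet such that w and w' represent the same graph. -/
open List

variable {α : Type*} [DecidableEq α]

/-- Two distinct letters `a` and `b` alternate in the word `w`:
their projection is an alternating sequence of `a`s and `b`s, both occurring. -/
def Alt (w : List α) (a b : α) : Prop :=
  a ≠ b ∧ a ∈ w ∧ b ∈ w ∧
    (w.filter (fun x => decide (x = a ∨ x = b))).Chain' (· ≠ ·)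

/-- The word `w` represents the graph `G` with vertex set `V`:
the alphabet of `w` is `V` and adjacency coincides with alternation. -/
def Represents (w : List α) (V : Finset α) (G : SimpleGraph α) : Prop :=
  w.toFinset = V ∧ ∀ a b : α, G.Adj a b ↔ Alt w a b

/-- A word is `k`-uniform if every letter of its alphabet occurs exactly `k` times. -/
def KUniform (k : ℕ) (w : List α) : Prop :=
  ∀ a ∈ w, w.count a = k

/-- Number of maximal blocks of `true`s in a boolean word. -/
def blockCount (l : List Bool) : ℕ :=
  ((l.zip (false :: l)).filter (fun p => p.1 && !p.2)).length

/-- `w` is `k`-local witnessed by the marking sequence `σ`. -/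
def KLocalWith (k : ℕ) (w σ : List α) : Prop :=
  σ.Nodup ∧ σ.toFinset = w.toFinset ∧
    ∀ i : ℕ, blockCount (w.map (fun x => decide (x ∈ σ.take i))) ≤ k

/-- `w` is `k`-local: some marking sequence witnesses `k`-locality. -/
def KLocal (k : ℕ) (w : List α) : Prop := ∃ σ : List α, KLocalWith k w σ

/-- The subgraph of `G` induced by `U` (as a graph on the same ambient type). -/
def inducedOn (G : SimpleGraph α) (U : Finset α) : SimpleGraph α where
  Adj a b := G.Adj a b ∧ a ∈ U ∧ b ∈ U
  symm := by
    constructor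
    intro a b h
    exact ⟨h.1.symm, h.2.2, h.2.1⟩
  loopless := by
    constructor
    intro a h
    exact G.loopless.irrefl a h.1

/-- Add a vertex `v` dominating the vertex set `V` to the graph `G`. -/
def addDom (G : SimpleGraph α) (V : Finset α) (v : α) : SimpleGraph α where
  Adj a b := G.Adj a b ∨ (a = v ∧ b ∈ V ∧ b ≠ v) ∨ (b = v ∧ a ∈ V ∧ a ≠ v)
  symm := by
    constructor
    intro a b h
    rcases h with h | h | h
    · exact Or.inl h.symm
    · exact Or.inr (Or.inr h)
    · exact Or.inr (Or.inl h)
  loopless := by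
    constructor
    intro a h
    rcases h with h | h | h
    · exact G.loopless.irrefl a h
    · exact h.2.2 h.1
    · exact h.2.2 h.1

/-- Threshold graphs (with explicit vertex set): built from the empty graph
by repeatedly adding isolated or dominating vertices. -/
inductive IsThreshold : SimpleGraph α → Finset α → Prop
  | empty : IsThreshold ⊥ ∅
  | isolated {G V v} (hv : v ∉ V) (h : IsThreshold G V) : IsThreshold G (insert v V)
  | dominating {G V v} (hv : v ∉ V) (h : IsThreshold G V) :
      IsThreshold (addDom G V v) (insert v V)

/-- Clique-width expressions over label type `L` and vertex type `α`. -/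
inductive CWExpr (L α : Type*) where
  | vertex : L → α → CWExpr L α
  | union : CWExpr L α → CWExpr L α → CWExpr L α
  | connect : L → L → CWExpr L α → CWExpr L α
  | relabel : L → L → CWExpr L α → CWExpr L α

/-- The graph of all edges between label `i` and label `j` within `V` under labelling `f`. -/
def connGraph {L : Type*} [DecidableEq L] (V : Finset α) (f : α → L) (i j : L) :
    SimpleGraph α where
  Adj a b := a ≠ b ∧ a ∈ V ∧ b ∈ V ∧ ((f a = i ∧ f b = j) ∨ (f a = j ∧ f b = i))
  symm := by
    constructor
    intro a b h
    rcases h.2.2.2 with h4 | h4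
    · exact ⟨h.1.symm, h.2.2.1, h.2.1, Or.inr ⟨h4.2, h4.1⟩⟩
    · exact ⟨h.1.symm, h.2.2.1, h.2.1, Or.inl ⟨h4.2, h4.1⟩⟩
  loopless := by
    constructor
    intro a h
    exact h.1 rfl

/-- `Builds e V f G`: the clique-width expression `e` builds the labelled graph
with vertex set `V`, labelling `f` and edge structure `G`. -/
inductive Builds {L : Type*} [DecidableEq L] : CWExpr L α → Finset α → (α → L) → SimpleGraph α → Prop
  | vertex (l : L) (v : α) : Builds (.vertex l v) {v} (fun _ => l) ⊥
  | union {e₁ e₂ V₁ V₂ f₁ f₂ G₁ G₂} (h₁ : Builds e₁ V₁ f₁ G₁) (h₂ : Builds e₂ V₂ f₂ G₂)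
      (hd : _root_.Disjoint V₁ V₂) :
      Builds (.union e₁ e₂) (V₁ ∪ V₂) (fun x => if x ∈ V₁ then f₁ x else f₂ x) (G₁ ⊔ G₂)
  | connect {e V f G} (i j : L) (hij : i ≠ j) (h : Builds e V f G) :
      Builds (.connect i j e) V f (G ⊔ connGraph V f i j)
  | relabel {e V f G} (i j : L) (h : Builds e V f G) :
      Builds (.relabel i j e) V (fun x => if f x = i then j else f x) G

/-- The clique-width of `G` (with vertex set `V`) is at most `k`. -/
def CliqueWidthLE (k : ℕ) (G : SimpleGraph α) (V : Finset α) : Prop :=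
  ∃ (e : CWExpr (Fin k) α) (f : α → Fin k), Builds e V f G

/-- The crown graph `H_{n,n}`: complete bipartite minus a perfect matching. -/
def crown (n : ℕ) : SimpleGraph (Fin n ⊕ Fin n) where
  Adj a b :=
    match a, b with
    | .inl x, .inr y => x ≠ y
    | .inr x, .inl y => x ≠ y
    | _, _ => False
  symm := by
    constructor
    intro a b h
    cases a <;> cases b <;> simp_all
    · exact fun hc => h hc.symm
    · exact fun hc => h hc.symm
  loopless := by
    constructor
    intro a h
    cases a <;> simp_all

/-- The disjoint-union-of-cliques graph associated with a partition `P` of `[n]`. -/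
def partGraph {n : ℕ} (P : Finpartition (Finset.univ : Finset (Fin n))) :
    SimpleGraph (Fin n) where
  Adj x y := x ≠ y ∧ ∃ C ∈ P.parts, x ∈ C ∧ y ∈ C
  symm := by
    constructor
    intro a b h
    obtain ⟨hne, C, hC, h1, h2⟩ := h
    exact ⟨hne.symm, C, hC, h2, h1⟩
  loopless := by
    constructor
    intro a h
    exact h.1 rfl

/-- The word associated with a partition: each block written twice in a row. -/
noncomputable def partWord {n : ℕ} (P : Finpartition (Finset.univ : Finset (Fin n))) : List (Fin n) :=
  (P.parts.toList.map (fun C => C.toList ++ C.toList)).flatten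


/-! If `a` and `b` alternate and `a` is marked before `b`, then at the stage where `a` gets
marked, distinct occurrences of `a` lie in distinct marked blocks, since an unmarked `b`
separates them; hence `a` occurs at most `k` times and `b` at most `k + 1` times. Letters that
alternate with nothing are moved to the end as factors `aa`. The resulting word is padded to a
`(k + 1)`-uniform one by prepending, one at a time, a letter of minimal count whose first
occurrence is the latest among those: it never begins the projection onto a pair it alternates
with, so prepending it changes no alternation. -/

def pairProj (w : List α) (a b : α) : List α :=
  w.filter (fun x => decide (x = a ∨ x = b))

theorem alt_iff {w : List α} {a b : α} :
    Alt w a b ↔ a ≠ b ∧ a ∈ w ∧ b ∈ w ∧ (pairProj w a b).IsChain (· ≠ ·) :=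
  Iff.rfl

section PairProj

variable {w : List α} {a b c : α}

theorem pairProj_comm (w : List α) (a b : α) : pairProj w b a = pairProj w a b :=
  filter_congr fun z _ => by simp [or_comm]

theorem pairProj_cons (c : α) (w : List α) (a b : α) :
    pairProj (c :: w) a b = if c = a ∨ c = b then c :: pairProj w a b else pairProj w a b := by
  by_cases h : c = a ∨ c = b <;> simp [pairProj, h]

theorem pairProj_append (u v : List α) (a b : α) :
    pairProj (u ++ v) a b = pairProj u a b ++ pairProj v a b :=
  filter_append ..

theorem eq_or_eq_of_mem_pairProj (h : c ∈ pairProj w a b) : c = a ∨ c = b := by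
  simpa using of_mem_filter h

theorem count_pairProj_left (w : List α) (a b : α) : (pairProj w a b).count a = w.count a :=
  count_filter (by simp)

theorem Alt.symm (h : Alt w a b) : Alt w b a := by
  obtain ⟨hne, ha, hb, hch⟩ := alt_iff.1 h
  exact alt_iff.2 ⟨hne.symm, hb, ha, by rwa [pairProj_comm]⟩

theorem not_alt_of_infix (h : [a, a] <:+: w) : ¬ Alt w a b := by
  intro hab
  have := (alt_iff.1 hab).2.2.2.infix (h.filter _)
  simp at this

end PairProj

theorem count_le_count_add_of_isChain_ne {L : List α} {a b : α} (hab : a ≠ b)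
    (hL : ∀ z ∈ L, z = a ∨ z = b) (hch : L.IsChain (· ≠ ·)) :
    L.count a ≤ L.count b + if L.head? = some a then 1 else 0 := by
  induction L with
  | nil => simp
  | cons c t ih =>
    rw [isChain_cons] at hch
    have iht := ih (fun z hz => hL z (mem_cons_of_mem _ hz)) hch.2
    rcases hL c mem_cons_self with rfl | rfl
    · have : t.head? ≠ some c := fun h => hch.1 c h rfl
      simp_all
    · simp [hab.symm]
      split_ifs at iht <;> omega

theorem Alt.count_le_count_add_one {w : List α} {a b : α} (h : Alt w a b) :
    w.count a ≤ w.count b + 1 := by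
  obtain ⟨hne, -, -, hch⟩ := alt_iff.1 h
  have := count_le_count_add_of_isChain_ne hne (fun _ => eq_or_eq_of_mem_pairProj) hch
  rw [count_pairProj_left, ← pairProj_comm, count_pairProj_left] at this
  split_ifs at this <;> omega

theorem Alt.count_le_count_of_head? {w : List α} {a b : α} (h : Alt w a b)
    (hhead : (pairProj w a b).head? = some a) : w.count b ≤ w.count a := by
  obtain ⟨hne, -, -, hch⟩ := alt_iff.1 h
  have := count_le_count_add_of_isChain_ne hne.symm
    (fun _ hz => (eq_or_eq_of_mem_pairProj hz).symm) hch
  rwa [← pairProj_comm, count_pairProj_left, pairProj_comm, count_pairProj_left, hhead,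
    if_neg (by simpa using hne), add_zero] at this

theorem idxOf_lt_idxOf_of_head?_filter {q : α → Bool} {l : List α} {a b : α} (hab : a ≠ b)
    (hb : b ∈ l) (hqb : q b) (h : (l.filter q).head? = some a) : l.idxOf a < l.idxOf b := by
  induction l with
  | nil => simp at hb
  | cons c t ih =>
    by_cases hqc : q c
    · obtain rfl : c = a := by simpa [filter_cons, hqc] using h
      rw [idxOf_cons_self, idxOf_cons_ne _ hab]
      exact Nat.succ_pos _
    · have hca : c ≠ a := by
        rintro rfl
        rw [filter_cons_of_neg hqc] at h
        exact hqc (of_mem_filter (mem_of_mem_head? h))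
      have hcb : c ≠ b := by rintro rfl; exact hqc hqb
      rw [filter_cons_of_neg hqc] at h
      rw [idxOf_cons_ne _ hca, idxOf_cons_ne _ hcb]
      exact Nat.succ_lt_succ (ih (by simpa [Ne.symm hcb] using hb) h)

def blockCountAfter (prev : Bool) (l : List Bool) : ℕ :=
  ((l.zip (prev :: l)).filter (fun p => p.1 && !p.2)).length

theorem blockCount_eq_blockCountAfter (l : List Bool) : blockCount l = blockCountAfter false l :=
  rfl

theorem blockCountAfter_cons (prev c : Bool) (l : List Bool) :
    blockCountAfter prev (c :: l) = blockCountAfter c l + if c && !prev then 1 else 0 := by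
  by_cases h : (c && !prev) = true <;> simp [blockCountAfter, h]

/-- An occurrence of `a` opens a new marked block unless it lies in the block `prev` belongs to;
between two occurrences of `a` the unmarked `b` closes the block. -/
theorem count_le_blockCountAfter {p : α → Bool} {a b : α} (ha : p a) (hb : p b = false)
    (w : List α) (prev : Bool) (hw : (pairProj w a b).IsChain (· ≠ ·)) :
    w.count a ≤ blockCountAfter prev (w.map p) +
      if prev ∧ (pairProj w a b).head? = some a then 1 else 0 := by
  induction w generalizing prev with
  | nil => simp
  | cons c t ih =>
    have hab : a ≠ b := by rintro rfl; simp [ha] at hb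
    rw [map_cons, blockCountAfter_cons, pairProj_cons]
    rw [pairProj_cons] at hw
    by_cases hca : c = a
    · subst hca
      rw [if_pos (Or.inl rfl), isChain_cons] at hw
      rw [if_pos (Or.inl rfl)]
      have hhead : (pairProj t c b).head? ≠ some c := fun h => hw.1 c h rfl
      have := ih true hw.2
      cases prev <;> simp_all
    by_cases hcb : c = b
    · subst hcb
      rw [if_pos (Or.inr rfl)] at hw
      have := ih false hw.tail
      simp_all [Ne.symm hab]
    rw [if_neg (not_or.2 ⟨hca, hcb⟩)] at hw ⊢
    have := ih (p c) hw
    rw [count_cons_of_ne hca]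
    cases prev <;> cases p c <;> simp_all <;> split_ifs at * <;> omega

theorem count_le_blockCount {p : α → Bool} {a b : α} {w : List α} (ha : p a) (hb : p b = false)
    (hw : (pairProj w a b).IsChain (· ≠ ·)) : w.count a ≤ blockCount (w.map p) := by
  simpa [blockCount_eq_blockCountAfter] using count_le_blockCountAfter ha hb w false hw

namespace KLocalWith

variable {k : ℕ} {w σ : List α} {a b : α}

theorem mem_of_mem (hl : KLocalWith k w σ) (ha : a ∈ w) : a ∈ σ := by
  rwa [← mem_toFinset, hl.2.1, mem_toFinset]

theorem count_le_of_alt_of_idxOf_lt (hl : KLocalWith k w σ) (h : Alt w a b)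
    (hab : σ.idxOf a < σ.idxOf b) : w.count a ≤ k := by
  have hmarked : ∀ z ∈ w, z ∈ σ.take (σ.idxOf a + 1) ↔ σ.idxOf z < σ.idxOf a + 1 :=
    fun z hz => mem_take_iff_idxOf_lt (hl.mem_of_mem hz)
  refine (count_le_blockCount (p := fun z => decide (z ∈ σ.take (σ.idxOf a + 1))) ?_ ?_
    (alt_iff.1 h).2.2.2).trans (hl.2.2 _)
  · simp [hmarked a h.2.1]
  · simp [hmarked b h.2.2.1]
    omega

theorem count_le_succ_of_alt (hl : KLocalWith k w σ) (h : Alt w a b) : w.count a ≤ k + 1 := by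
  rcases lt_trichotomy (σ.idxOf a) (σ.idxOf b) with hab | hab | hab
  · exact (hl.count_le_of_alt_of_idxOf_lt h hab).trans k.le_succ
  · exact absurd ((idxOf_inj (hl.mem_of_mem h.2.1)).1 hab) h.1
  · have := hl.count_le_of_alt_of_idxOf_lt h.symm hab
    have := h.count_le_count_add_one
    omega

theorem one_le (hl : KLocalWith k w σ) (hw : w ≠ []) : 1 ≤ k := by
  obtain ⟨c, t, rfl⟩ := exists_cons_of_ne_nil hw
  have := hl.2.2 σ.length
  simp only [take_length, map_cons, blockCount_eq_blockCountAfter, blockCountAfter_cons,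
    hl.mem_of_mem mem_cons_self, decide_true, Bool.not_false, Bool.and_self, if_true] at this
  omega

end KLocalWith

theorem alt_cons_iff {u : List α} {c : α} (hc : c ∈ u)
    (hhead : ∀ x y, Alt u x y → (pairProj u x y).head? ≠ some c) (x y : α) :
    Alt (c :: u) x y ↔ Alt u x y := by
  have hmem : ∀ z, z ∈ c :: u ↔ z ∈ u := fun z => by
    simpa using fun h : z = c => h ▸ hc
  simp only [alt_iff, hmem, pairProj_cons]
  refine and_congr_right fun hxy => and_congr_right fun hx => and_congr_right fun hy => ?_
  split_ifs
  · rw [isChain_cons]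
    refine ⟨And.right, fun hch => ⟨?_, hch⟩⟩
    rintro z hz rfl
    exact hhead x y (alt_iff.2 ⟨hxy, hx, hy, hch⟩) hz
  · rfl

theorem exists_mem_count_lt_forall_alt_head?_ne {m : ℕ} {u : List α}
    (h : ∃ a ∈ u, u.count a < m) :
    ∃ c ∈ u, u.count c < m ∧ ∀ x y, Alt u x y → (pairProj u x y).head? ≠ some c := by
  obtain ⟨a, ha, hlt⟩ := h
  obtain ⟨c, hc, hmin⟩ := (u.toFinset.filter (u.count · < m)).exists_min_image
    (fun c => toLex (u.count c, OrderDual.toDual (u.idxOf c)))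
    ⟨a, Finset.mem_filter.2 ⟨mem_toFinset.2 ha, hlt⟩⟩
  simp only [Finset.mem_filter, mem_toFinset] at hc hmin
  refine ⟨c, hc.1, hc.2, fun x y hxy hhead => ?_⟩
  obtain ⟨b, hcb, hhead'⟩ : ∃ b, Alt u c b ∧ (pairProj u c b).head? = some c := by
    rcases eq_or_eq_of_mem_pairProj (mem_of_mem_head? hhead) with rfl | rfl
    · exact ⟨y, hxy, hhead⟩
    · exact ⟨x, hxy.symm, by rwa [pairProj_comm]⟩
  have hcount := hcb.count_le_count_of_head? hhead'
  have hidx := idxOf_lt_idxOf_of_head?_filter hcb.1 hcb.2.2.1 (by simp) hhead'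
  have := hmin b ⟨hcb.2.2.1, by omega⟩
  rw [Prod.Lex.toLex_le_toLex, OrderDual.toDual_le_toDual] at this
  omega

theorem length_lt_mul_card_toFinset {m : ℕ} {u : List α} {a : α}
    (hu : ∀ b ∈ u, u.count b ≤ m) (ha : a ∈ u) (hlt : u.count a < m) :
    u.length < m * u.toFinset.card := by
  rw [← sum_toFinset_count_eq_length, mul_comm, ← smul_eq_mul, ← Finset.sum_const]
  exact Finset.sum_lt_sum (fun b hb => hu b (mem_toFinset.1 hb)) ⟨a, mem_toFinset.2 ha, hlt⟩

theorem exists_uniform_of_count_le {m : ℕ} (u : List α) (hu : ∀ a ∈ u, u.count a ≤ m) :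
    ∃ u' : List α, u'.toFinset = u.toFinset ∧ KUniform m u' ∧
      ∀ a b, Alt u a b ↔ Alt u' a b := by
  by_cases huni : KUniform m u
  · exact ⟨u, rfl, huni, fun _ _ => Iff.rfl⟩
  obtain ⟨c, hc, hlt, hhead⟩ := exists_mem_count_lt_forall_alt_head?_ne <| by
    simp only [KUniform, not_forall] at huni
    obtain ⟨a, ha, hne⟩ := huni
    exact ⟨a, ha, lt_of_le_of_ne (hu a ha) hne⟩
  have hcu : (c :: u).toFinset = u.toFinset := by
    rw [toFinset_cons, Finset.insert_eq_of_mem (mem_toFinset.2 hc)]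
  have hlen := length_lt_mul_card_toFinset hu hc hlt
  have hu' : ∀ a ∈ c :: u, (c :: u).count a ≤ m := by
    intro a ha
    by_cases hac : a = c
    · rw [hac, count_cons_self]
      omega
    · rw [count_cons_of_ne (Ne.symm hac)]
      exact hu a ((mem_cons.1 ha).resolve_left hac)
  obtain ⟨u', hu'_alph, hu'_uni, hu'_alt⟩ := exists_uniform_of_count_le (c :: u) hu'
  exact ⟨u', hu'_alph.trans hcu, hu'_uni,
    fun x y => (alt_cons_iff hc hhead x y).symm.trans (hu'_alt x y)⟩
termination_by m * u.toFinset.card - u.length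
decreasing_by
  rw [hcu, length_cons]
  omega

theorem count_flatMap_pair (l : List α) (a : α) :
    (l.flatMap fun x => [x, x]).count a = 2 * l.count a := by
  induction l with
  | nil => simp
  | cons c t ih =>
    rw [flatMap_cons, count_append, ih]
    simp [count_cons]
    omega

def moveDoubledToEnd (w S : List α) : List α :=
  w.filter (· ∉ S) ++ S.flatMap fun x => [x, x]

section MoveDoubledToEnd

variable {w S : List α} {a b : α}

theorem mem_moveDoubledToEnd (hS : ∀ a ∈ S, a ∈ w) :
    a ∈ moveDoubledToEnd w S ↔ a ∈ w := by
  simp only [moveDoubledToEnd, mem_append, mem_filter, mem_flatMap, mem_cons, not_mem_nil,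
    or_false, or_self, exists_eq_right', decide_eq_true_eq]
  by_cases ha : a ∈ S <;> simp [ha, hS a]

theorem count_moveDoubledToEnd_of_not_mem (ha : a ∉ S) :
    (moveDoubledToEnd w S).count a = w.count a := by
  rw [moveDoubledToEnd, count_append, count_filter (by simpa using ha), count_flatMap_pair,
    count_eq_zero_of_not_mem ha, mul_zero, add_zero]

theorem count_moveDoubledToEnd_of_mem (hS : S.Nodup) (ha : a ∈ S) :
    (moveDoubledToEnd w S).count a = 2 := by
  rw [moveDoubledToEnd, count_append, count_flatMap_pair, count_eq_one_of_mem hS ha,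
    count_eq_zero_of_not_mem fun h => by simpa [ha] using of_mem_filter h]

theorem not_alt_moveDoubledToEnd_of_mem (ha : a ∈ S) : ¬ Alt (moveDoubledToEnd w S) a b :=
  not_alt_of_infix ((infix_flatMap_of_mem ha fun x => [x, x]).trans (suffix_append _ _).isInfix)

theorem alt_moveDoubledToEnd_iff (hS : ∀ a ∈ S, a ∈ w ∧ ∀ b, ¬ Alt w a b) :
    Alt (moveDoubledToEnd w S) a b ↔ Alt w a b := by
  by_cases ha : a ∈ S
  · exact iff_of_false (not_alt_moveDoubledToEnd_of_mem ha) ((hS a ha).2 b)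
  by_cases hb : b ∈ S
  · exact iff_of_false (fun h => not_alt_moveDoubledToEnd_of_mem hb h.symm)
      fun h => (hS b hb).2 a h.symm
  have hflat : pairProj (S.flatMap fun x => [x, x]) a b = [] := by
    refine filter_eq_nil_iff.2 fun z hz => ?_
    have hzS : z ∈ S := by simpa using hz
    simp only [decide_eq_true_eq, not_or]
    exact ⟨fun h => ha (h ▸ hzS), fun h => hb (h ▸ hzS)⟩
  have hproj : pairProj (moveDoubledToEnd w S) a b = pairProj w a b := by
    rw [moveDoubledToEnd, pairProj_append, hflat, append_nil, pairProj, pairProj, filter_filter]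
    refine filter_congr fun z _ => ?_
    by_cases hz : z = a ∨ z = b
    · rcases hz with rfl | rfl <;> simp [ha, hb]
    · simp [hz]
  simp only [alt_iff, mem_moveDoubledToEnd fun a ha => (hS a ha).1, hproj]

end MoveDoubledToEnd

theorem exists_count_le_of_alt {m : ℕ} (hm : 2 ≤ m) (w : List α)
    (hw : ∀ a b, Alt w a b → w.count a ≤ m) :
    ∃ u : List α, u.toFinset = w.toFinset ∧ (∀ a ∈ u, u.count a ≤ m) ∧
      ∀ a b, Alt w a b ↔ Alt u a b := by
  classical
  let S := (w.filter fun a => ∀ b, ¬ Alt w a b).dedup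
  have hS : ∀ a, a ∈ S ↔ a ∈ w ∧ ∀ b, ¬ Alt w a b := by simp [S]
  have hmem : ∀ a, a ∈ moveDoubledToEnd w S ↔ a ∈ w :=
    fun _ => mem_moveDoubledToEnd fun a ha => ((hS a).1 ha).1
  refine ⟨moveDoubledToEnd w S, ?_, fun a ha => ?_,
    fun a b => (alt_moveDoubledToEnd_iff fun a ha => (hS a).1 ha).symm⟩
  · ext a
    simp [hmem]
  by_cases haS : a ∈ S
  · exact (count_moveDoubledToEnd_of_mem (nodup_dedup _) haS).trans_le hm
  · obtain ⟨b, hab⟩ : ∃ b, Alt w a b := by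
      simpa [(hmem a).1 ha] using mt (hS a).2 haS
    exact (count_moveDoubledToEnd_of_not_mem haS).trans_le (hw a b hab)

/-- Every `k`-local word represents a `(k+1)`-representable graph:
there is a `(k+1)`-uniform word over the same alphabet representing the same graph. -/
theorem stmt0 {α : Type*} [DecidableEq α] (k : ℕ) (w : List α) (h : KLocal k w) :
    ∃ w' : List α, w'.toFinset = w.toFinset ∧ KUniform (k + 1) w' ∧
      ∀ a b : α, Alt w a b ↔ Alt w' a b := by
  obtain ⟨σ, hσ⟩ := h
  rcases eq_or_ne w [] with rfl | hw
  · exact ⟨[], rfl, by simp [KUniform], fun _ _ => Iff.rfl⟩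
  obtain ⟨u, hu_alph, hu_count, hu_alt⟩ :=
    exists_count_le_of_alt (by have := hσ.one_le hw; omega) w fun _ _ => hσ.count_le_succ_of_alt
  obtain ⟨w', hw'_alph, hw'_uni, hw'_alt⟩ := exists_uniform_of_count_le u hu_count
  exact ⟨w', hw'_alph.trans hu_alph, hw'_uni, fun a b => (hu_alt a b).trans (hw'_alt a b)⟩
end

section
/- For every k ∈ ℕ, the class of graphs representable by k-local words is hereditary: if G is represented by a k-local word w, then for every subset U of V(G), the word π_U(w) is k-local and represents G|_U. -/
open List

variable {α : Type*} [DecidableEq α]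

/-!
Projecting a word onto `U` keeps, for letters of `U`, exactly the occurrences that alternation
looks at, so it represents the induced subgraph. For locality, run the marking sequence of `w`
restricted to `U`: each of its stages marks, among letters of `U`, exactly what some stage of the
original sequence marks, and the marked pattern of `π_U(w)` is then a subsequence of that of `w`.
Deleting letters from a boolean word never creates a new block of `true`s.
-/

/-- Blocks of `true`s in `l`, when `l` is preceded by the bit `prev`. -/
def blockCountFrom : Bool → List Bool → ℕ
  | _, [] => 0
  | prev, b :: l => (if b && !prev then 1 else 0) + blockCountFrom b l

lemma blockCount_eq_blockCountFrom (l : List Bool) : blockCount l = blockCountFrom false l := by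
  suffices ∀ prev, ((l.zip (prev :: l)).filter (fun p => p.1 && !p.2)).length =
      blockCountFrom prev l from this false
  induction l with
  | nil => simp [blockCountFrom]
  | cons b t ih =>
    intro prev
    simp only [zip_cons_cons, filter_cons, blockCountFrom]
    split <;> simp [ih b]; omega

lemma blockCountFrom_le_cons (prev b : Bool) (l : List Bool) :
    blockCountFrom prev l ≤ blockCountFrom prev (b :: l) := by
  rcases l with _ | ⟨c, t⟩
  · simp [blockCountFrom]
  · cases prev <;> cases b <;> cases c <;> simp [blockCountFrom]

lemma blockCountFrom_le_of_sublist {l₁ l₂ : List Bool} (h : l₁ <+ l₂) (prev : Bool) :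
    blockCountFrom prev l₁ ≤ blockCountFrom prev l₂ := by
  induction h generalizing prev with
  | slnil => rfl
  | cons b _ ih => exact (ih prev).trans (blockCountFrom_le_cons prev b _)
  | cons_cons b _ ih => exact Nat.add_le_add_left (ih b) _

lemma blockCount_le_of_sublist {l₁ l₂ : List Bool} (h : l₁ <+ l₂) :
    blockCount l₁ ≤ blockCount l₂ := by
  simpa only [blockCount_eq_blockCountFrom] using blockCountFrom_le_of_sublist h false

lemma List.exists_take_filter_eq_filter_take {β : Type*} (p : β → Bool) (l : List β) (i : ℕ) :
    ∃ j, (l.filter p).take i = (l.take j).filter p := by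
  induction l generalizing i with
  | nil => exact ⟨0, by simp⟩
  | cons a t ih =>
    by_cases hp : p a
    · cases i with
      | zero => exact ⟨0, by simp⟩
      | succ i =>
        obtain ⟨j, hj⟩ := ih i
        exact ⟨j + 1, by simp [hp, hj]⟩
    · obtain ⟨j, hj⟩ := ih i
      exact ⟨j + 1, by simp [hp, hj]⟩

lemma KLocalWith.filter {k : ℕ} {w σ : List α} (h : KLocalWith k w σ) (p : α → Bool) :
    KLocalWith k (w.filter p) (σ.filter p) := by
  obtain ⟨hnodup, halph, hblocks⟩ := h
  refine ⟨hnodup.filter p, by rw [toFinset_filter, toFinset_filter, halph], fun i => ?_⟩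
  obtain ⟨j, hj⟩ := σ.exists_take_filter_eq_filter_take p i
  have hmarks : (w.filter p).map (fun x => decide (x ∈ (σ.filter p).take i)) =
      (w.filter p).map (fun x => decide (x ∈ σ.take j)) := by
    refine map_congr_left fun x hx => ?_
    simp [hj, mem_filter, (mem_filter.mp hx).2]
  rw [hmarks]
  exact (blockCount_le_of_sublist ((filter_sublist (l := w)).map _)).trans (hblocks j)

lemma KLocal.filter {k : ℕ} {w : List α} (h : KLocal k w) (p : α → Bool) :
    KLocal k (w.filter p) :=
  let ⟨σ, hσ⟩ := h
  ⟨σ.filter p, hσ.filter p⟩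

lemma alt_filter_mem_iff {w : List α} {U : Finset α} {a b : α} (ha : a ∈ U) (hb : b ∈ U) :
    Alt (w.filter (fun x => decide (x ∈ U))) a b ↔ Alt w a b := by
  have hpair : (w.filter (fun x => decide (x ∈ U))).filter (fun x => decide (x = a ∨ x = b)) =
      w.filter (fun x => decide (x = a ∨ x = b)) := by
    rw [filter_filter]
    refine filter_congr fun x _ => ?_
    by_cases hx : x = a ∨ x = b
    · rcases hx with rfl | rfl <;> simp [*]
    · simp [hx]
  simp only [Alt, hpair, mem_filter, ha, hb, decide_true, and_true]

lemma Represents.filter_mem {w : List α} {V U : Finset α} {G : SimpleGraph α}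
    (h : Represents w V G) (hU : U ⊆ V) :
    Represents (w.filter (fun x => decide (x ∈ U))) U (inducedOn G U) := by
  obtain ⟨halph, hadj⟩ := h
  refine ⟨?_, fun a b => ?_⟩
  · ext x
    simp only [toFinset_filter, Finset.mem_filter, halph, decide_eq_true_eq]
    exact ⟨And.right, fun hx => ⟨hU hx, hx⟩⟩
  · constructor
    · rintro ⟨hab, ha, hb⟩
      exact (alt_filter_mem_iff ha hb).mpr ((hadj a b).mp hab)
    · intro hab
      have ha : a ∈ U := by simpa using (mem_filter.mp hab.2.1).2
      have hb : b ∈ U := by simpa using (mem_filter.mp hab.2.2.1).2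
      exact ⟨(hadj a b).mpr ((alt_filter_mem_iff ha hb).mp hab), ha, hb⟩

/-- Graphs representable by `k`-local words are hereditary: the projection
`π_U(w)` of a `k`-local word `w` is `k`-local and represents the induced subgraph. -/
theorem stmt4 {α : Type*} [DecidableEq α] (k : ℕ) (w : List α) (V : Finset α)
    (G : SimpleGraph α) (hw : KLocal k w) (h : Represents w V G)
    (U : Finset α) (hU : U ⊆ V) :
    KLocal k (w.filter (fun x => decide (x ∈ U))) ∧
      Represents (w.filter (fun x => decide (x ∈ U))) U (inducedOn G U) :=
  ⟨hw.filter _, h.filter_mem hU⟩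
end

section
/- For every n ∈ ℕ, a disjoint union of cliques on vertex set [n] (i.e., a graph whose edge set is the union of complete graphs on the blocks of a partition P of [n]) is representable by a 2-local word, namely the word obtained by concatenating, for each block C = {c_1,…,c_m} of P, the factor c_1 c_2 ⋯ c_m c_1 c_2 ⋯ c_m. -/
open List

variable {α : Type*} [DecidableEq α]

section StmtNineAux

variable {α : Type*} [DecidableEq α]

private def bcAux (p : Bool) (l : List Bool) : ℕ :=
  ((l.zip (p :: l)).filter (fun q => q.1 && !q.2)).length

private lemma blockCount_eq_bcAux (l : List Bool) : blockCount l = bcAux false l := rfl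

private lemma bcAux_nil (p : Bool) : bcAux p [] = 0 := rfl

private lemma bcAux_cons (p b : Bool) (l : List Bool) :
    bcAux p (b :: l) = (if b && !p then 1 else 0) + bcAux b l := by
  cases hb : (b && !p) <;> simp [bcAux, List.zip_cons_cons, List.filter_cons, hb, Nat.add_comm]

private lemma bcAux_rep (n : ℕ) (b p : Bool) (l : List Bool) :
    bcAux p (List.replicate n b ++ l) =
      (if n = 0 then bcAux p l else (if b && !p then 1 else 0) + bcAux b l) := by
  induction n generalizing p with
  | zero => simp
  | succ n ih =>
    rw [List.replicate_succ, List.cons_append, bcAux_cons, ih b]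
    cases n <;> cases b <;> cases p <;> simp

private lemma key (a b c d : ℕ) :
    blockCount (List.replicate a true ++ (List.replicate b false ++
      (List.replicate c true ++ List.replicate d false))) ≤ 2 := by
  rw [blockCount_eq_bcAux, ← List.append_nil (List.replicate d false)]
  simp only [bcAux_rep, bcAux_nil]
  split_ifs <;> simp_all

omit [DecidableEq α] in
private lemma map_const_rep (l : List α) (f : α → Bool) (b : Bool) (h : ∀ x ∈ l, f x = b) :
    l.map f = List.replicate l.length b := by
  have := List.eq_replicate_of_mem (l := l.map f) (a := b) (by
    intro y hy; obtain ⟨x, hx, rfl⟩ := List.mem_map.mp hy; exact h x hx)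
  simpa using this

omit [DecidableEq α] in
private lemma take_decomp (L : List (Finset α)) (i : ℕ) :
    ((L.map Finset.toList).flatten.take i = (L.map Finset.toList).flatten) ∨
    ∃ (L1 : List (Finset α)) (C : Finset α) (L2 : List (Finset α)) (j : ℕ),
      L = L1 ++ C :: L2 ∧
      (L.map Finset.toList).flatten.take i
        = ((L1.map Finset.toList).flatten ++ C.toList.take j) ∧ j ≤ C.toList.length := by
  induction L generalizing i with
  | nil => left; simp
  | cons C L ih =>
    by_cases h : i ≤ C.toList.length
    · right
      refine ⟨[], C, L, i, rfl, ?_, h⟩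
      simp [List.take_append_of_le_length h]
    · push_neg at h
      rcases ih (i - C.toList.length) with h1 | ⟨L1, C', L2, j, hL, h2, h3⟩
      · left
        simp only [List.map_cons, List.flatten_cons, List.take_append,
          List.take_of_length_le h.le, h1]
      · right
        refine ⟨C :: L1, C', L2, j, by rw [hL]; rfl, ?_, h3⟩
        simp only [List.map_cons, List.flatten_cons, List.take_append,
          List.take_of_length_le h.le, h2, List.append_assoc]

omit [DecidableEq α] in
private lemma eq_single {t : List α} {c : α} (ht : t.Nodup) (hc : c ∈ t)
    (hy : ∀ y ∈ t, y = c) : t = [c] := by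
  have hrep := List.eq_replicate_of_mem hy
  have hlen : t.length ≤ 1 := by
    rcases t with _ | ⟨x, _ | ⟨y, t⟩⟩
    · simp
    · simp
    · exfalso
      have hx1 := hy x (by simp)
      have hy1 := hy y (by simp)
      subst hx1
      rw [hy1] at ht
      simp at ht
  have hlen1 : t.length = 1 := le_antisymm hlen (by
    cases t with
    | nil => simp at hc
    | cons x t => simp)
  rw [hrep, hlen1]; rfl

omit [DecidableEq α] in
private lemma pair_eq {l : List α} {a b : α} (hn : l.Nodup) (ha : a ∈ l) (hb : b ∈ l)
    (hab : a ≠ b) (hx : ∀ x ∈ l, x = a ∨ x = b) : l = [a, b] ∨ l = [b, a] := by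
  cases l with
  | nil => simp at ha
  | cons x t =>
    rcases hx x (by simp) with rfl | rfl
    · left
      have hat : x ∉ t := (List.nodup_cons.mp hn).1
      have hbt : b ∈ t := by
        rcases List.mem_cons.mp hb with h | h
        · exact absurd h.symm hab
        · exact h
      have := eq_single (List.nodup_cons.mp hn).2 hbt (by
        intro y hy
        rcases hx y (List.mem_cons_of_mem _ hy) with rfl | rfl
        · exact absurd hy hat
        · rfl)
      rw [this]
    · right
      have hat : x ∉ t := (List.nodup_cons.mp hn).1
      have hbt : a ∈ t := by
        rcases List.mem_cons.mp ha with h | h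
        · exact absurd h hab
        · exact h
      have := eq_single (List.nodup_cons.mp hn).2 hbt (by
        intro y hy
        rcases hx y (List.mem_cons_of_mem _ hy) with rfl | rfl
        · rfl
        · exact absurd hy hat)
      rw [this]

end StmtNineAux

/-- The disjoint union of cliques given by a partition `P` of `[n]` is
represented by the `2`-local word writing each block twice in a row. -/
theorem stmt9 (n : ℕ) (P : Finpartition (Finset.univ : Finset (Fin n))) :
    KLocal 2 (partWord P) ∧ Represents (partWord P) Finset.univ (partGraph P) := by
  classical
  have hLnd : P.parts.toList.Nodup := Finset.nodup_toList _
  have hLdis : P.parts.toList.Pairwise (fun C D => _root_.Disjoint C D) := by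
    refine List.Pairwise.imp_of_mem ?_ hLnd
    intro C D hC hD hne
    exact P.disjoint (by simpa using hC) (by simpa using hD) hne
  have hcover : ∀ x : Fin n, ∃ C ∈ P.parts.toList, x ∈ C := by
    intro x
    obtain ⟨C, hC, hx⟩ := P.exists_mem (Finset.mem_univ x)
    exact ⟨C, Finset.mem_toList.mpr hC, hx⟩
  have hw : partWord P = (P.parts.toList.map (fun C => C.toList ++ C.toList)).flatten := rfl
  have hmemw : ∀ x : Fin n, x ∈ partWord P ↔ ∃ C ∈ P.parts.toList, x ∈ C := by
    intro x
    rw [hw]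
    simp [List.mem_flatten]
  set σ : List (Fin n) := (P.parts.toList.map Finset.toList).flatten with hσ
  have hmemσ : ∀ x : Fin n, x ∈ σ ↔ ∃ C ∈ P.parts.toList, x ∈ C := by
    intro x; rw [hσ]; simp [List.mem_flatten]
  constructor
  · refine ⟨σ, ?_, ?_, ?_⟩
    · rw [hσ, List.nodup_flatten]
      constructor
      · intro l hl
        obtain ⟨C, hC, rfl⟩ := List.mem_map.mp hl
        exact C.nodup_toList
      · rw [List.pairwise_map]
        refine hLdis.imp ?_
        intro C D h x hx1 hx2
        exact (Finset.disjoint_left.mp h (Finset.mem_toList.mp hx1)) (Finset.mem_toList.mp hx2)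
    · ext x
      simp only [List.mem_toFinset]
      rw [hmemσ, hmemw]
    · intro i
      rcases take_decomp P.parts.toList i with h1 | ⟨L1, C, L2, j, hLeq, hTake, hj⟩
      · rw [← hσ] at h1
        have hall : ∀ x ∈ partWord P, (fun x => decide (x ∈ σ.take i)) x = true := by
          intro x hx
          simp only [decide_eq_true_eq]
          rw [h1]
          exact (hmemσ x).mpr ((hmemw x).mp hx)
        rw [map_const_rep (partWord P) (fun x => decide (x ∈ σ.take i)) true hall]
        have := key (partWord P).length 0 0 0
        simpa using this
      · rw [← hσ] at hTake
        have hpw : List.Pairwise (fun C D => _root_.Disjoint C D) (L1 ++ C :: L2) := hLeq ▸ hLdis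
        obtain ⟨p1, p2, hcross⟩ := List.pairwise_append.mp hpw
        have hCL2 : ∀ D ∈ L2, Disjoint C D := (List.pairwise_cons.mp p2).1
        have htdnd : (C.toList.take j ++ C.toList.drop j).Nodup := by
          rw [List.take_append_drop]; exact C.nodup_toList
        have hdisjtd := List.disjoint_of_nodup_append htdnd
        have hT1 : ∀ x : Fin n, (∃ D ∈ L1, x ∈ D) → x ∈ σ.take i := by
          rintro x ⟨D, hD, hx⟩
          rw [hTake]
          exact List.mem_append_left _
            (List.mem_flatten.mpr ⟨D.toList, List.mem_map.mpr ⟨D, hD, rfl⟩,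
              Finset.mem_toList.mpr hx⟩)
        have hT2 : ∀ x ∈ C.toList.take j, x ∈ σ.take i := by
          intro x hx; rw [hTake]; exact List.mem_append_right _ hx
        have hT3 : ∀ x ∈ C.toList.drop j, x ∉ σ.take i := by
          intro x hx hmem
          rw [hTake] at hmem
          rcases List.mem_append.mp hmem with h | h
          · obtain ⟨l, hl, hxl⟩ := List.mem_flatten.mp h
            obtain ⟨D, hD, rfl⟩ := List.mem_map.mp hl
            have hxC : x ∈ C := Finset.mem_toList.mp (List.drop_subset _ _ hx)
            exact Finset.disjoint_left.mp (hcross D hD C List.mem_cons_self)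
              (Finset.mem_toList.mp hxl) hxC
          · exact hdisjtd h hx
        have hT4 : ∀ x : Fin n, (∃ D ∈ L2, x ∈ D) → x ∉ σ.take i := by
          rintro x ⟨D, hD, hx⟩ hmem
          rw [hTake] at hmem
          rcases List.mem_append.mp hmem with h | h
          · obtain ⟨l, hl, hxl⟩ := List.mem_flatten.mp h
            obtain ⟨D', hD', rfl⟩ := List.mem_map.mp hl
            exact Finset.disjoint_left.mp (hcross D' hD' D (List.mem_cons_of_mem _ hD))
              (Finset.mem_toList.mp hxl) hx
          · have hxC : x ∈ C := Finset.mem_toList.mp (List.take_subset _ _ h)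
            exact Finset.disjoint_left.mp (hCL2 D hD) hxC hx
        have hwdec : partWord P = ((L1.map (fun C => C.toList ++ C.toList)).flatten)
            ++ (((C.toList.take j ++ C.toList.drop j) ++ (C.toList.take j ++ C.toList.drop j))
               ++ (L2.map (fun C => C.toList ++ C.toList)).flatten) := by
          rw [hw, hLeq]
          simp [List.take_append_drop]
        set f : Fin n → Bool := fun x => decide (x ∈ σ.take i) with hf
        have m1 : ((L1.map (fun C => C.toList ++ C.toList)).flatten).map f
            = List.replicate ((L1.map (fun C => C.toList ++ C.toList)).flatten).length true := by
          apply map_const_rep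
          intro x hx
          obtain ⟨l, hl, hxl⟩ := List.mem_flatten.mp hx
          obtain ⟨D, hD, rfl⟩ := List.mem_map.mp hl
          have hxD : x ∈ D := by
            rcases List.mem_append.mp hxl with h | h <;> exact Finset.mem_toList.mp h
          simp [hf, hT1 x ⟨D, hD, hxD⟩]
        have m2 : (C.toList.take j).map f = List.replicate (C.toList.take j).length true := by
          apply map_const_rep; intro x hx; simp [hf, hT2 x hx]
        have m3 : (C.toList.drop j).map f = List.replicate (C.toList.drop j).length false := by
          apply map_const_rep; intro x hx; simp [hf, hT3 x hx]
        have m4 : ((L2.map (fun C => C.toList ++ C.toList)).flatten).map f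
            = List.replicate ((L2.map (fun C => C.toList ++ C.toList)).flatten).length false := by
          apply map_const_rep
          intro x hx
          obtain ⟨l, hl, hxl⟩ := List.mem_flatten.mp hx
          obtain ⟨D, hD, rfl⟩ := List.mem_map.mp hl
          have hxD : x ∈ D := by
            rcases List.mem_append.mp hxl with h | h <;> exact Finset.mem_toList.mp h
          simp [hf, hT4 x ⟨D, hD, hxD⟩]
        have hfinal : (partWord P).map f =
            List.replicate (((L1.map (fun C => C.toList ++ C.toList)).flatten).length
              + (C.toList.take j).length) true ++
            (List.replicate (C.toList.drop j).length false ++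
            (List.replicate (C.toList.take j).length true ++
             List.replicate ((C.toList.drop j).length
              + ((L2.map (fun C => C.toList ++ C.toList)).flatten).length) false)) := by
          rw [hwdec]
          simp only [List.map_append, m1, m2, m3, m4, List.replicate_add, List.append_assoc]
        rw [hfinal]
        exact key _ _ _ _
  · constructor
    · ext x
      simp only [List.mem_toFinset, Finset.mem_univ, iff_true]
      exact (hmemw x).mpr (hcover x)
    · intro a b
      constructor
      · rintro ⟨hab, C, hC, haC, hbC⟩
        have hCL : C ∈ P.parts.toList := Finset.mem_toList.mpr hC
        refine ⟨hab, (hmemw a).mpr ⟨C, hCL, haC⟩, (hmemw b).mpr ⟨C, hCL, hbC⟩, ?_⟩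
        obtain ⟨s, t, hst⟩ := List.append_of_mem hCL
        have hpw : List.Pairwise (fun C D => _root_.Disjoint C D) (s ++ C :: t) := hst ▸ hLdis
        obtain ⟨p1, p2, hcross⟩ := List.pairwise_append.mp hpw
        have hCt : ∀ D ∈ t, Disjoint C D := (List.pairwise_cons.mp p2).1
        set p : Fin n → Bool := fun x => decide (x = a ∨ x = b) with hp
        have hwdec : partWord P = ((s.map (fun C => C.toList ++ C.toList)).flatten)
            ++ ((C.toList ++ C.toList) ++ (t.map (fun C => C.toList ++ C.toList)).flatten) := by
          rw [hw, hst]; simp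
        have hnotmem : ∀ (D : Finset (Fin n)), Disjoint D C → ∀ x ∈ D, ¬ p x = true := by
          intro D hD x hx
          simp only [hp, decide_eq_true_eq]
          rintro (rfl | rfl)
          · exact Finset.disjoint_left.mp hD hx haC
          · exact Finset.disjoint_left.mp hD hx hbC
        have hpre : ((s.map (fun C => C.toList ++ C.toList)).flatten).filter p = [] := by
          rw [List.filter_eq_nil_iff]
          intro x hx
          obtain ⟨l, hl, hxl⟩ := List.mem_flatten.mp hx
          obtain ⟨D, hD, rfl⟩ := List.mem_map.mp hl
          have hxD : x ∈ D := by
            rcases List.mem_append.mp hxl with h | h <;> exact Finset.mem_toList.mp h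
          exact hnotmem D (hcross D hD C List.mem_cons_self) x hxD
        have hpost : ((t.map (fun C => C.toList ++ C.toList)).flatten).filter p = [] := by
          rw [List.filter_eq_nil_iff]
          intro x hx
          obtain ⟨l, hl, hxl⟩ := List.mem_flatten.mp hx
          obtain ⟨D, hD, rfl⟩ := List.mem_map.mp hl
          have hxD : x ∈ D := by
            rcases List.mem_append.mp hxl with h | h <;> exact Finset.mem_toList.mp h
          exact hnotmem D (hCt D hD).symm x hxD
        have hfC : C.toList.filter p = [a, b] ∨ C.toList.filter p = [b, a] := by
          apply pair_eq (List.Nodup.filter _ C.nodup_toList)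
          · rw [List.mem_filter]
            exact ⟨Finset.mem_toList.mpr haC, by simp [hp]⟩
          · rw [List.mem_filter]
            exact ⟨Finset.mem_toList.mpr hbC, by simp [hp]⟩
          · exact hab
          · intro x hx
            have := (List.mem_filter.mp hx).2
            simpa [hp] using this
        have hfw : (partWord P).filter p = C.toList.filter p ++ C.toList.filter p := by
          rw [hwdec]
          simp [List.filter_append, hpre, hpost]
        rw [hfw]
        rcases hfC with h | h <;> rw [h] <;>
          simp [List.Chain', List.isChain_cons_cons, hab, Ne.symm hab]
      · rintro ⟨hab, haw, hbw, hchain⟩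
        obtain ⟨Ca, hCa, haCa⟩ := (hmemw a).mp haw
        by_cases hbCa : b ∈ Ca
        · exact ⟨hab, Ca, Finset.mem_toList.mp hCa, haCa, hbCa⟩
        · exfalso
          obtain ⟨s, t, hst⟩ := List.append_of_mem hCa
          set p : Fin n → Bool := fun x => decide (x = a ∨ x = b) with hp
          have hfCa : Ca.toList.filter p = [a] := by
            apply eq_single (List.Nodup.filter _ Ca.nodup_toList)
            · rw [List.mem_filter]
              exact ⟨Finset.mem_toList.mpr haCa, by simp [hp]⟩
            · intro y hy
              have h2 := (List.mem_filter.mp hy).2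
              have h1 := (List.mem_filter.mp hy).1
              simp only [hp, decide_eq_true_eq] at h2
              rcases h2 with rfl | rfl
              · rfl
              · exact absurd (Finset.mem_toList.mp h1) hbCa
          have hwdec : partWord P = ((s.map (fun C => C.toList ++ C.toList)).flatten)
              ++ ((Ca.toList ++ Ca.toList) ++ (t.map (fun C => C.toList ++ C.toList)).flatten) := by
            rw [hw, hst]; simp
          have hinf : [a, a] <:+: (partWord P).filter p := by
            refine ⟨((s.map (fun C => C.toList ++ C.toList)).flatten).filter p,
              ((t.map (fun C => C.toList ++ C.toList)).flatten).filter p, ?_⟩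
            rw [hwdec]
            simp [List.filter_append, hfCa]
          have h2 := hchain.infix hinf
          simp [List.isChain_cons_cons] at h2
end

section
/- A graph is a threshold graph if and only if it contains no induced subgraph isomorphic to the 4-cycle C_4, the path on four vertices P_4, or the perfect matching on four vertices 2K_2. -/
open List

variable {α : Type*} [DecidableEq α]

/-- An induced 4-cycle `a-b-c-d-a`. -/
def C4Pat {α : Type*} (G : SimpleGraph α) (a b c d : α) : Prop :=
  G.Adj a b ∧ G.Adj b c ∧ G.Adj c d ∧ G.Adj d a ∧ ¬ G.Adj a c ∧ ¬ G.Adj b d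

/-- An induced path `a-b-c-d`. -/
def P4Pat {α : Type*} (G : SimpleGraph α) (a b c d : α) : Prop :=
  G.Adj a b ∧ G.Adj b c ∧ G.Adj c d ∧ ¬ G.Adj a c ∧ ¬ G.Adj b d ∧ ¬ G.Adj a d

/-- An induced perfect matching on `{a,b,c,d}`: edges `ab` and `cd` only. -/
def M2Pat {α : Type*} (G : SimpleGraph α) (a b c d : α) : Prop :=
  G.Adj a b ∧ G.Adj c d ∧ ¬ G.Adj a c ∧ ¬ G.Adj a d ∧ ¬ G.Adj b c ∧ ¬ G.Adj b d

/-- Auxiliary: existence of a bad induced pattern. -/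
def BadIn (G : SimpleGraph α) (V : Finset α) : Prop :=
  ∃ a b c d : α, a ∈ V ∧ b ∈ V ∧ c ∈ V ∧ d ∈ V ∧
    a ≠ b ∧ a ≠ c ∧ a ≠ d ∧ b ≠ c ∧ b ≠ d ∧ c ≠ d ∧
    (C4Pat G a b c d ∨ P4Pat G a b c d ∨ M2Pat G a b c d)

lemma IsThreshold.edges_mem {G : SimpleGraph α} {V : Finset α} (h : IsThreshold G V) :
    ∀ a b : α, G.Adj a b → a ∈ V ∧ b ∈ V := by
  induction h with
  | empty => intro a b hab; exact absurd hab (by simp)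
  | isolated hv h ih =>
    intro a b hab
    exact ⟨Finset.mem_insert_of_mem (ih a b hab).1, Finset.mem_insert_of_mem (ih a b hab).2⟩
  | dominating hv h ih =>
    intro a b hab
    rcases hab with hab | ⟨ha, hb, _⟩ | ⟨hb, ha, _⟩
    · exact ⟨Finset.mem_insert_of_mem (ih a b hab).1, Finset.mem_insert_of_mem (ih a b hab).2⟩
    · exact ⟨ha ▸ Finset.mem_insert_self _ _, Finset.mem_insert_of_mem hb⟩
    · exact ⟨Finset.mem_insert_of_mem ha, hb ▸ Finset.mem_insert_self _ _⟩

lemma IsThreshold.noBad {G : SimpleGraph α} {V : Finset α} (h : IsThreshold G V) :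
    ¬ BadIn G V := by
  induction h with
  | empty =>
    rintro ⟨a, b, c, d, ha, -⟩
    exact absurd ha (Finset.notMem_empty a)
  | isolated hv h ih =>
    rintro ⟨a, b, c, d, -, -, -, -, hab, hac, had, hbc, hbd, hcd, hpat⟩
    have hTE := h.edges_mem
    apply ih
    rcases hpat with ⟨h1, h2, h3, h4, h5, h6⟩ | ⟨h1, h2, h3, h4, h5, h6⟩ | ⟨h1, h2, h3, h4, h5, h6⟩
    · exact ⟨a, b, c, d, (hTE a b h1).1, (hTE a b h1).2, (hTE b c h2).2, (hTE c d h3).2,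
        hab, hac, had, hbc, hbd, hcd, Or.inl ⟨h1, h2, h3, h4, h5, h6⟩⟩
    · exact ⟨a, b, c, d, (hTE a b h1).1, (hTE a b h1).2, (hTE b c h2).2, (hTE c d h3).2,
        hab, hac, had, hbc, hbd, hcd, Or.inr (Or.inl ⟨h1, h2, h3, h4, h5, h6⟩)⟩
    · exact ⟨a, b, c, d, (hTE a b h1).1, (hTE a b h1).2, (hTE c d h2).1, (hTE c d h2).2,
        hab, hac, had, hbc, hbd, hcd, Or.inr (Or.inr ⟨h1, h2, h3, h4, h5, h6⟩)⟩
  | @dominating G V v hv h ih =>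
    rintro ⟨a, b, c, d, ha, hb, hc, hd, hab, hac, had, hbc, hbd, hcd, hpat⟩
    have hadj : ∀ w ∈ V, w ≠ v → (addDom G V v).Adj v w :=
      fun w hw hne => Or.inr (Or.inl ⟨rfl, hw, hne⟩)
    have key : ∀ p q : α, p ∈ insert v V → q ∈ insert v V → p ≠ q →
        ¬ (addDom G V v).Adj p q → p ≠ v ∧ q ≠ v := by
      intro p q hp hq hpq hnadj
      constructor
      · rintro rfl
        rcases Finset.mem_insert.mp hq with rfl | hqV
        · exact hpq rfl
        · exact hnadj (hadj q hqV (fun h' => hpq h'.symm))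
      · rintro rfl
        rcases Finset.mem_insert.mp hp with rfl | hpV
        · exact hpq rfl
        · exact hnadj ((hadj p hpV hpq).symm)
    have hnac : ¬ (addDom G V v).Adj a c := by
      rcases hpat with ⟨-, -, -, -, h5, -⟩ | ⟨-, -, -, h4, -, -⟩ | ⟨-, -, h3, -, -, -⟩
      exacts [h5, h4, h3]
    have hnbd : ¬ (addDom G V v).Adj b d := by
      rcases hpat with ⟨-, -, -, -, -, h6⟩ | ⟨-, -, -, -, h5, -⟩ | ⟨-, -, -, -, -, h6⟩
      exacts [h6, h5, h6]
    obtain ⟨hav, hcv⟩ := key a c ha hc hac hnac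
    obtain ⟨hbv, hdv⟩ := key b d hb hd hbd hnbd
    have haV : a ∈ V := (Finset.mem_insert.mp ha).resolve_left hav
    have hbV : b ∈ V := (Finset.mem_insert.mp hb).resolve_left hbv
    have hcV : c ∈ V := (Finset.mem_insert.mp hc).resolve_left hcv
    have hdV : d ∈ V := (Finset.mem_insert.mp hd).resolve_left hdv
    have tr : ∀ p q : α, p ∈ V → q ∈ V → ((addDom G V v).Adj p q ↔ G.Adj p q) := by
      intro p q hp hq
      constructor
      · rintro (h' | ⟨rfl, -, -⟩ | ⟨rfl, -, -⟩)
        · exact h'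
        · exact absurd hp hv
        · exact absurd hq hv
      · exact fun h' => Or.inl h'
    apply ih
    refine ⟨a, b, c, d, haV, hbV, hcV, hdV, hab, hac, had, hbc, hbd, hcd, ?_⟩
    rcases hpat with ⟨h1, h2, h3, h4, h5, h6⟩ | ⟨h1, h2, h3, h4, h5, h6⟩ | ⟨h1, h2, h3, h4, h5, h6⟩
    · exact Or.inl ⟨(tr a b haV hbV).mp h1, (tr b c hbV hcV).mp h2, (tr c d hcV hdV).mp h3,
        (tr d a hdV haV).mp h4, fun h' => h5 ((tr a c haV hcV).mpr h'),
        fun h' => h6 ((tr b d hbV hdV).mpr h')⟩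
    · exact Or.inr (Or.inl ⟨(tr a b haV hbV).mp h1, (tr b c hbV hcV).mp h2,
        (tr c d hcV hdV).mp h3, fun h' => h4 ((tr a c haV hcV).mpr h'),
        fun h' => h5 ((tr b d hbV hdV).mpr h'), fun h' => h6 ((tr a d haV hdV).mpr h')⟩)
    · exact Or.inr (Or.inr ⟨(tr a b haV hbV).mp h1, (tr c d hcV hdV).mp h2,
        fun h' => h3 ((tr a c haV hcV).mpr h'), fun h' => h4 ((tr a d haV hdV).mpr h'),
        fun h' => h5 ((tr b c hbV hcV).mpr h'), fun h' => h6 ((tr b d hbV hdV).mpr h')⟩)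

open scoped Classical in
lemma keyDom {G : SimpleGraph α} {V : Finset α}
    (hE : ∀ a b : α, G.Adj a b → a ∈ V ∧ b ∈ V) (hP : ¬ BadIn G V)
    {v : α} (hvV : v ∈ V)
    (hmax : ∀ y ∈ V, (V.filter (G.Adj y)).card ≤ (V.filter (G.Adj v)).card)
    {u x : α} (hvu : ¬ G.Adj v u) (huv : u ≠ v) (hux : G.Adj u x) : False := by
  have huV : u ∈ V := (hE u x hux).1
  have hxV : x ∈ V := (hE u x hux).2
  have hxv : x ≠ v := by rintro rfl; exact hvu hux.symm
  have hnuv : ¬ G.Adj u v := fun h => hvu h.symm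
  -- Step 1: x is adjacent to v
  have hAxv : G.Adj x v := by
    by_contra hAxv
    have hvx : ¬ G.Adj v x := fun h => hAxv h.symm
    by_cases hc : ∀ w, G.Adj v w → G.Adj u w
    · have hss : insert x (V.filter (G.Adj v)) ⊆ V.filter (G.Adj u) := by
        intro y hy
        rcases Finset.mem_insert.mp hy with rfl | hy
        · exact Finset.mem_filter.mpr ⟨hxV, hux⟩
        · obtain ⟨hyV, hvy⟩ := Finset.mem_filter.mp hy
          exact Finset.mem_filter.mpr ⟨hyV, hc y hvy⟩
      have hx' : x ∉ V.filter (G.Adj v) := fun h => hvx (Finset.mem_filter.mp h).2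
      have h1 := Finset.card_le_card hss
      rw [Finset.card_insert_of_notMem hx'] at h1
      have h2 := hmax u huV
      omega
    · push_neg at hc
      obtain ⟨w, hvw, huw⟩ := hc
      have hwV : w ∈ V := (hE v w hvw).2
      have hwv : w ≠ v := hvw.ne'
      have hwu : w ≠ u := by rintro rfl; exact hvu hvw
      have hwx : w ≠ x := by rintro rfl; exact huw hux
      by_cases hxw : G.Adj x w
      · -- P4 : u - x - w - v
        exact hP ⟨u, x, w, v, huV, hxV, hwV, hvV, hux.ne, hwu.symm, huv, hwx.symm,
          hxv, hwv, Or.inr (Or.inl ⟨hux, hxw, hvw.symm, huw, hAxv, hnuv⟩)⟩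
      · -- 2K2 : edges ux and vw
        exact hP ⟨u, x, v, w, huV, hxV, hvV, hwV, hux.ne, huv, hwu.symm, hxv, hwx.symm,
          hwv.symm, Or.inr (Or.inr ⟨hux, hvw, hnuv, huw, hAxv, hxw⟩)⟩
  -- Step 2: find w adjacent to v, not adjacent (nor equal) to x
  by_cases hc : ∀ w, G.Adj v w → w = x ∨ G.Adj x w
  · have hss : insert u (insert v ((V.filter (G.Adj v)).erase x)) ⊆ V.filter (G.Adj x) := by
      intro y hy
      rcases Finset.mem_insert.mp hy with rfl | hy
      · exact Finset.mem_filter.mpr ⟨huV, hux.symm⟩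
      rcases Finset.mem_insert.mp hy with rfl | hy
      · exact Finset.mem_filter.mpr ⟨hvV, hAxv⟩
      obtain ⟨hyx, hy⟩ := Finset.mem_erase.mp hy
      obtain ⟨hyV, hvy⟩ := Finset.mem_filter.mp hy
      rcases hc y hvy with rfl | h'
      · exact absurd rfl hyx
      · exact Finset.mem_filter.mpr ⟨hyV, h'⟩
    have h1 := Finset.card_le_card hss
    have hu1 : u ∉ insert v ((V.filter (G.Adj v)).erase x) := by
      intro h'
      rcases Finset.mem_insert.mp h' with rfl | h'
      · exact huv rfl
      · exact hvu (Finset.mem_filter.mp (Finset.mem_erase.mp h').2).2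
    have hv1 : v ∉ (V.filter (G.Adj v)).erase x := by
      intro h'
      exact G.loopless.irrefl v (Finset.mem_filter.mp (Finset.mem_erase.mp h').2).2
    have hxmem : x ∈ V.filter (G.Adj v) := Finset.mem_filter.mpr ⟨hxV, hAxv.symm⟩
    rw [Finset.card_insert_of_notMem hu1, Finset.card_insert_of_notMem hv1,
      Finset.card_erase_of_mem hxmem] at h1
    have h2 := hmax x hxV
    have h3 : 1 ≤ (V.filter (G.Adj v)).card := Finset.card_pos.mpr ⟨x, hxmem⟩
    omega
  · push_neg at hc
    obtain ⟨w, hvw, hwx, hxw⟩ := hc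
    have hwV : w ∈ V := (hE v w hvw).2
    have hwv : w ≠ v := hvw.ne'
    have hwu : w ≠ u := by rintro rfl; exact hvu hvw
    by_cases huw : G.Adj u w
    · -- C4 : u - x - v - w - u
      exact hP ⟨u, x, v, w, huV, hxV, hvV, hwV, hux.ne, huv, hwu.symm, hxv,
        fun h' => hwx h'.symm, hwv.symm, Or.inl ⟨hux, hAxv, hvw, huw.symm, hnuv, hxw⟩⟩
    · -- P4 : u - x - v - w
      exact hP ⟨u, x, v, w, huV, hxV, hvV, hwV, hux.ne, huv, hwu.symm, hxv,
        fun h' => hwx h'.symm, hwv.symm, Or.inr (Or.inl ⟨hux, hAxv, hvw, hnuv, hxw, huw⟩)⟩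

open scoped Classical in
lemma backward (n : ℕ) (V : Finset α) (hcard : V.card ≤ n) (G : SimpleGraph α)
    (hE : ∀ a b : α, G.Adj a b → a ∈ V ∧ b ∈ V) (hP : ¬ BadIn G V) :
    IsThreshold G V := by
  induction n generalizing V G with
  | zero =>
    have hVe : V = ∅ := Finset.card_eq_zero.mp (Nat.le_zero.mp hcard)
    subst hVe
    have hG : G = ⊥ := by
      ext a b
      simp only [SimpleGraph.bot_adj, iff_false]
      intro h
      exact absurd (hE a b h).1 (Finset.notMem_empty a)
    rw [hG]
    exact IsThreshold.empty
  | succ n ih =>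
    rcases V.eq_empty_or_nonempty with rfl | hne
    · have hG : G = ⊥ := by
        ext a b
        simp only [SimpleGraph.bot_adj, iff_false]
        intro h
        exact absurd (hE a b h).1 (Finset.notMem_empty a)
      rw [hG]
      exact IsThreshold.empty
    by_cases hiso : ∃ v ∈ V, ∀ u, ¬ G.Adj v u
    · obtain ⟨v, hvV, hviso⟩ := hiso
      have hE' : ∀ a b : α, G.Adj a b → a ∈ V.erase v ∧ b ∈ V.erase v := by
        intro a b hab
        refine ⟨Finset.mem_erase.mpr ⟨?_, (hE a b hab).1⟩,
          Finset.mem_erase.mpr ⟨?_, (hE a b hab).2⟩⟩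
        · rintro rfl; exact hviso b hab
        · rintro rfl; exact hviso a hab.symm
      have hP' : ¬ BadIn G (V.erase v) := by
        rintro ⟨a, b, c, d, ha, hb, hc, hd, rest⟩
        exact hP ⟨a, b, c, d, Finset.mem_of_mem_erase ha, Finset.mem_of_mem_erase hb,
          Finset.mem_of_mem_erase hc, Finset.mem_of_mem_erase hd, rest⟩
      have hc' : (V.erase v).card ≤ n := by
        have h1 := Finset.card_erase_of_mem hvV
        have h2 : 1 ≤ V.card := Finset.card_pos.mpr ⟨v, hvV⟩
        omega
      have ht := IsThreshold.isolated (Finset.notMem_erase v V) (ih (V.erase v) hc' G hE' hP')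
      rwa [Finset.insert_erase hvV] at ht
    · push_neg at hiso
      obtain ⟨v, hvV, hmax⟩ := V.exists_max_image (fun y => (V.filter (G.Adj y)).card) hne
      have hdom : ∀ u ∈ V, u ≠ v → G.Adj v u := by
        intro u huV huv
        by_contra hvu
        obtain ⟨x, hux⟩ := hiso u huV
        exact keyDom hE hP hvV hmax hvu huv hux
      set G' := inducedOn G (V.erase v) with hG'
      have hE' : ∀ a b : α, G'.Adj a b → a ∈ V.erase v ∧ b ∈ V.erase v :=
        fun a b h' => ⟨h'.2.1, h'.2.2⟩
      have hP' : ¬ BadIn G' (V.erase v) := by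
        rintro ⟨a, b, c, d, ha, hb, hc, hd, h1, h2, h3, h4, h5, h6, hpat⟩
        apply hP
        have tr : ∀ p q : α, p ∈ V.erase v → q ∈ V.erase v → (G'.Adj p q ↔ G.Adj p q) := by
          intro p q hp hq
          exact ⟨fun h' => h'.1, fun h' => ⟨h', hp, hq⟩⟩
        refine ⟨a, b, c, d, Finset.mem_of_mem_erase ha, Finset.mem_of_mem_erase hb,
          Finset.mem_of_mem_erase hc, Finset.mem_of_mem_erase hd, h1, h2, h3, h4, h5, h6, ?_⟩
        rcases hpat with ⟨g1, g2, g3, g4, g5, g6⟩ | ⟨g1, g2, g3, g4, g5, g6⟩ |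
            ⟨g1, g2, g3, g4, g5, g6⟩
        · exact Or.inl ⟨(tr a b ha hb).mp g1, (tr b c hb hc).mp g2, (tr c d hc hd).mp g3,
            (tr d a hd ha).mp g4, fun h' => g5 ((tr a c ha hc).mpr h'),
            fun h' => g6 ((tr b d hb hd).mpr h')⟩
        · exact Or.inr (Or.inl ⟨(tr a b ha hb).mp g1, (tr b c hb hc).mp g2,
            (tr c d hc hd).mp g3, fun h' => g4 ((tr a c ha hc).mpr h'),
            fun h' => g5 ((tr b d hb hd).mpr h'), fun h' => g6 ((tr a d ha hd).mpr h')⟩)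
        · exact Or.inr (Or.inr ⟨(tr a b ha hb).mp g1, (tr c d hc hd).mp g2,
            fun h' => g3 ((tr a c ha hc).mpr h'), fun h' => g4 ((tr a d ha hd).mpr h'),
            fun h' => g5 ((tr b c hb hc).mpr h'), fun h' => g6 ((tr b d hb hd).mpr h')⟩)
      have hc' : (V.erase v).card ≤ n := by
        have h1 := Finset.card_erase_of_mem hvV
        have h2 : 1 ≤ V.card := Finset.card_pos.mpr ⟨v, hvV⟩
        omega
      have ht := IsThreshold.dominating (Finset.notMem_erase v V)
        (ih (V.erase v) hc' G' hE' hP')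
      have heq : addDom G' (V.erase v) v = G := by
        ext a b
        constructor
        · rintro (⟨h', -, -⟩ | ⟨rfl, hb', hbv⟩ | ⟨rfl, ha', hav⟩)
          · exact h'
          · exact hdom b (Finset.mem_of_mem_erase hb') hbv
          · exact (hdom a (Finset.mem_of_mem_erase ha') hav).symm
        · intro h'
          by_cases hav : a = v
          · subst hav
            exact Or.inr (Or.inl ⟨rfl, Finset.mem_erase.mpr ⟨h'.ne', (hE _ _ h').2⟩,
              h'.ne'⟩)
          by_cases hbv : b = v
          · subst hbv
            exact Or.inr (Or.inr ⟨rfl, Finset.mem_erase.mpr ⟨hav, (hE _ _ h').1⟩, hav⟩)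
          · exact Or.inl ⟨h', Finset.mem_erase.mpr ⟨hav, (hE _ _ h').1⟩,
              Finset.mem_erase.mpr ⟨hbv, (hE _ _ h').2⟩⟩
      rw [heq, Finset.insert_erase hvV] at ht
      exact ht

/-- A graph is a threshold graph iff it contains no induced `C₄`, `P₄`,
or `2K₂`. -/
theorem stmt13 {α : Type*} [DecidableEq α] (G : SimpleGraph α) (V : Finset α)
    (hE : ∀ a b : α, G.Adj a b → a ∈ V ∧ b ∈ V) :
    IsThreshold G V ↔
      ¬ ∃ a b c d : α, a ∈ V ∧ b ∈ V ∧ c ∈ V ∧ d ∈ V ∧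
        a ≠ b ∧ a ≠ c ∧ a ≠ d ∧ b ≠ c ∧ b ≠ d ∧ c ≠ d ∧
        (C4Pat G a b c d ∨ P4Pat G a b c d ∨ M2Pat G a b c d) := by
  constructor
  · exact fun h => h.noBad
  · exact fun h => backward V.card V le_rfl G hE h
end
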